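/- arXiv:1506.07853 — 8 statements merged into one kernel-verified Lean document; each statement's English description precedes it below -/
import Mathlib

section
/- Let C₁ and C₀ be finitely generated free ℤ-modules and ∂ : C₁ → C₀ a ℤ-linear map such that the quotient C₀ ⧸ range(∂) is torsion-free (as holds for the boundary operator ∂₁ of a connected finite simplicial complex). Let G be an abelian group (in the paper G = 𝔽* is the multiplicative group of a field). Then the restriction map ω ↦ ω|ker ∂ induces a group isomorphism Hom(C₁, G) ⧸ im(d) ≅ Hom(ker ∂, G), where d : Hom(C₀, G) → Hom(C₁, G) is precomposition with ∂. Equivalently: (i) every group homomorphism ker ∂ → G extends to a homomorphism C₁ → G, and (ii) a homomorphism ω : C₁ → G vanishes on ker ∂ if and only if ω = f ∘ ∂ for some homomorphism f : C₀ → G. -/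
/-!
Over a PID a finitely generated torsion-free module is free, hence projective. So both
`C₁ ⧸ ker ∂ ≅ range ∂ ⊆ C₀` and, by torsion-freeness of the cokernel, `C₀ ⧸ range ∂` are
projective; `ker ∂` is then a direct summand of `C₁` and `range ∂` one of `C₀`. Homomorphisms
into any `G` extend from a direct summand, which gives (i) for `ker ∂`, and gives (ii) after
factoring `ω` through `C₁ ⧸ ker ∂ ≅ range ∂`.
-/

open LinearMap

section

variable {R M : Type*} [Ring R] [AddCommGroup M] [Module R M] {G : Type*} [AddCommGroup G]

theorem Submodule.exists_addMonoidHom_extend_of_projective_quotient (K : Submodule R M)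
    [Module.Projective R (M ⧸ K)] (μ : K →+ G) : ∃ ω : M →+ G, ∀ x : K, ω x = μ x := by
  obtain ⟨s, hs⟩ := K.mkQ.exists_rightInverse_of_surjective K.range_mkQ
  -- `x ↦ x - s [x]` is a retraction of `M` onto `K`, since `[x] = 0` for `x ∈ K`.
  have hmem (x : M) : x - s (K.mkQ x) ∈ K := by
    rw [← Submodule.Quotient.mk_eq_zero, Submodule.Quotient.mk_sub, ← K.mkQ_apply,
      ← K.mkQ_apply, ← LinearMap.comp_apply, hs, LinearMap.id_apply, sub_self]
  let r : M →ₗ[R] K := codRestrict K (LinearMap.id - s ∘ₗ K.mkQ) hmem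
  refine ⟨μ.comp r.toAddMonoidHom, fun x => ?_⟩
  have hx : K.mkQ x = 0 := (Submodule.Quotient.mk_eq_zero K).2 x.2
  have hr : r x = x := Subtype.ext (by simp [r, hx])
  simp [hr]

variable {N : Type*} [AddCommGroup N] [Module R N]

theorem LinearMap.exists_addMonoidHom_comp_eq_of_projective_cokernel (g : M →ₗ[R] N)
    [Module.Projective R (N ⧸ range g)] (ω : M →+ G) (hω : ∀ x ∈ ker g, ω x = 0) :
    ∃ f : N →+ G, ∀ x, ω x = f (g x) := by
  have hker : g.rangeRestrict.toAddMonoidHom.ker ≤ ω.ker := fun x hx =>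
    hω x (by rw [← g.ker_rangeRestrict]; exact hx)
  obtain ⟨f, hf⟩ := (range g).exists_addMonoidHom_extend_of_projective_quotient
    (g.rangeRestrict.toAddMonoidHom.liftOfSurjective g.surjective_rangeRestrict ⟨ω, hker⟩)
  refine ⟨f, fun x => ?_⟩
  rw [show g x = (g.rangeRestrict x : N) from rfl, hf]
  exact (AddMonoidHom.liftOfRightInverse_comp_apply _ _ _ ⟨ω, hker⟩ x).symm

end

section PID

variable {R M N : Type*} [CommRing R] [IsDomain R] [IsPrincipalIdealRing R]
  [AddCommGroup M] [Module R M] [AddCommGroup N] [Module R N]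

theorem Module.projective_of_finite_of_isTorsionFree [Module.Finite R M]
    [Module.IsTorsionFree R M] : Module.Projective R M :=
  have := Module.free_of_finite_type_torsion_free' (R := R) (M := M)
  inferInstance

theorem LinearMap.projective_quotient_ker [Module.Free R N] [Module.Finite R N] (f : M →ₗ[R] N) :
    Module.Projective R (M ⧸ ker f) :=
  have := Module.projective_of_finite_of_isTorsionFree (R := R) (M := range f)
  .of_equiv f.quotKerEquivRange.symm

theorem Submodule.projective_quotient_of_isTorsionFree [Module.Finite R M] (K : Submodule R M)
    [Module.IsTorsionFree R (M ⧸ K)] : Module.Projective R (M ⧸ K) :=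
  Module.projective_of_finite_of_isTorsionFree

end PID

-- The `ℤ`-action in the hypothesis is `zsmul`, not the scalar action of the given `Module ℤ M`.
theorem Module.isTorsionFree_int_of_noZeroSMulDivisors {M : Type*} [AddCommGroup M] [Module ℤ M]
    [NoZeroSMulDivisors ℤ M] : Module.IsTorsionFree ℤ M :=
  .of_smul_eq_zero fun n m h =>
    eq_zero_or_eq_zero_of_smul_eq_zero ((int_smul_eq_zsmul _ n m).symm.trans h)

theorem discrete_line_bundle_classification_general
    (C₁ C₀ : Type*) [AddCommGroup C₁] [AddCommGroup C₀]
    [Module ℤ C₁] [Module ℤ C₀]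
    [Module.Free ℤ C₀]
    [Module.Finite ℤ C₀]
    (bd : C₁ →ₗ[ℤ] C₀)
    (htf : NoZeroSMulDivisors ℤ (C₀ ⧸ LinearMap.range bd))
    (G : Type*) [AddCommGroup G] :
    (∀ μ : (LinearMap.ker bd) →+ G, ∃ ω : C₁ →+ G,
      ∀ c : LinearMap.ker bd, ω (c : C₁) = μ c) ∧
    (∀ ω : C₁ →+ G,
      (∀ c ∈ LinearMap.ker bd, ω c = 0) ↔ ∃ f : C₀ →+ G, ∀ x, ω x = f (bd x)) := by
  have := bd.projective_quotient_ker
  -- The instance must be the quotient's own module structure, which instance search does not pick.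
  have := @Module.isTorsionFree_int_of_noZeroSMulDivisors _ _ (Submodule.Quotient.module _) htf
  have := (range bd).projective_quotient_of_isTorsionFree
  refine ⟨(ker bd).exists_addMonoidHom_extend_of_projective_quotient, fun ω => ⟨?_, ?_⟩⟩
  · exact bd.exists_addMonoidHom_comp_eq_of_projective_cokernel ω
  · rintro ⟨f, hf⟩ c hc
    rw [hf, mem_ker.1 hc, map_zero]

/-- For `bd : C₁ → C₀` ℤ-linear between f.g. free ℤ-modules with torsion-free
cokernel, the restriction map induces an isomorphism
`Hom(C₁,G)/im d ≅ Hom(ker bd, G)`; equivalently (i) every homomorphism `ker bd → G` extends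
to `C₁`, and (ii) a homomorphism `ω : C₁ → G` vanishes on `ker bd` iff `ω = f ∘ bd`. -/
theorem discrete_line_bundle_classification
    (C₁ C₀ : Type*) [AddCommGroup C₁] [AddCommGroup C₀]
    [Module ℤ C₁] [Module ℤ C₀]
    [Module.Free ℤ C₁] [Module.Free ℤ C₀]
    [Module.Finite ℤ C₁] [Module.Finite ℤ C₀]
    (bd : C₁ →ₗ[ℤ] C₀)
    (htf : NoZeroSMulDivisors ℤ (C₀ ⧸ LinearMap.range bd))
    (G : Type*) [AddCommGroup G] :
    (∀ μ : (LinearMap.ker bd) →+ G, ∃ ω : C₁ →+ G,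
      ∀ c : LinearMap.ker bd, ω (c : C₁) = μ c) ∧
    (∀ ω : C₁ →+ G,
      (∀ c ∈ LinearMap.ker bd, ω c = 0) ↔ ∃ f : C₀ →+ G, ∀ x, ω x = f (bd x)) :=
  discrete_line_bundle_classification_general C₁ C₀ bd htf G
end

section
/- Let C₂ and C₁ be finitely generated free ℤ-modules and ∂ : C₂ → C₁ a ℤ-linear map. Suppose Ω : C₂ → ℝ is an additive group homomorphism (a closed real-valued discrete 2-form) which is integral, i.e. Ω(c) ∈ 2π·ℤ for every c ∈ ker ∂. Then there exists a group homomorphism ω : C₁ → Circle such that ω(∂ s) = Circle.exp(Ω(s)) for all s ∈ C₂. (Discrete analogue of Weil's theorem: every integral 2-form is realized as the curvature of a discrete hermitian line bundle, the homomorphism ω being its connection form.) -/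
/-!
Reduce `Ω` modulo `2π` to a homomorphism `C₂ → ℝ/2πℤ`. Integrality says exactly that it vanishes
on `ker ∂`, so it factors through `∂` on the subgroup `range ∂ ≤ C₁`; since `ℝ/2πℤ` is divisible,
hence an injective `ℤ`-module, this extends to all of `C₁`. Composing with `ℝ/2πℤ ≃ Circle`
gives the connection form `ω`.
-/

open Real

theorem AddMonoidHom.exists_comp_eq_of_ker_le {A B D : Type*} [AddCommGroup A] [AddCommGroup B]
    [AddCommGroup D] [DivisibleBy D ℤ] (f : A →+ B) (g : A →+ D) (hfg : f.ker ≤ g.ker) :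
    ∃ ψ : B →+ D, ψ.comp f = g := by
  have hker : f.rangeRestrict.ker ≤ g.ker := f.ker_rangeRestrict ▸ hfg
  let g₀ : f.range →+ D := f.rangeRestrict.liftOfSurjective f.rangeRestrict_surjective ⟨g, hker⟩
  obtain ⟨ψ, hψ⟩ := (Module.Baer.of_divisible D).extension_property_addMonoidHom
    f.range.subtype f.range.subtype_injective g₀
  refine ⟨ψ, AddMonoidHom.ext fun a => ?_⟩
  calc ψ (f a) = ψ (f.range.subtype (f.rangeRestrict a)) := rfl
    _ = g₀ (f.rangeRestrict a) := DFunLike.congr_fun hψ _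
    _ = g a := f.rangeRestrict.liftOfRightInverse_comp_apply _ _ _ _

theorem AddCircle.toCircle_coe_two_pi (x : ℝ) :
    toCircle (x : AddCircle (2 * π)) = Circle.exp x := by
  rw [toCircle_apply_mk, div_self (by positivity), one_mul]

theorem discrete_weil_theorem_general
    (C₂ C₁ : Type*) [AddCommGroup C₂] [AddCommGroup C₁]
    [Module ℤ C₂] [Module ℤ C₁]
    (bd : C₂ →ₗ[ℤ] C₁)
    (Ω : C₂ →+ ℝ)
    (hint : ∀ c ∈ LinearMap.ker bd, ∃ m : ℤ, Ω c = 2 * Real.pi * m) :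
    ∃ ω : AddChar C₁ Circle, ∀ s : C₂, ω (bd s) = Circle.exp (Ω s) := by
  let Ωmod : C₂ →+ AddCircle (2 * π) := (QuotientAddGroup.mk' _).comp Ω
  have hker : bd.toAddMonoidHom.ker ≤ Ωmod.ker := fun c hc => by
    obtain ⟨m, hm⟩ := hint c hc
    exact (QuotientAddGroup.eq_zero_iff _).2 ⟨m, by simp only [hm, zsmul_eq_mul, mul_comm]⟩
  have : Fact (0 < 2 * π) := ⟨two_pi_pos⟩
  obtain ⟨ψ, hψ⟩ := bd.toAddMonoidHom.exists_comp_eq_of_ker_le Ωmod hker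
  refine ⟨AddCircle.toCircle_addChar.compAddMonoidHom ψ, fun s => ?_⟩
  calc AddCircle.toCircle (ψ (bd s)) = AddCircle.toCircle (Ωmod s) := by
        rw [← DFunLike.congr_fun hψ s]; rfl
    _ = Circle.exp (Ω s) := AddCircle.toCircle_coe_two_pi _

/-- discrete Weil theorem: if `Ω : C₂ → ℝ` is an integral discrete 2-form
(its values on closed 2-chains lie in `2π·ℤ`), then there is a `Circle`-valued
connection form `ω : C₁ → Circle` with `ω (∂ s) = exp(i Ω(s))` for all `s`. -/
theorem discrete_weil_theorem
    (C₂ C₁ : Type*) [AddCommGroup C₂] [AddCommGroup C₁]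
    [Module ℤ C₂] [Module ℤ C₁]
    [Module.Free ℤ C₂] [Module.Free ℤ C₁]
    [Module.Finite ℤ C₂] [Module.Finite ℤ C₁]
    (bd : C₂ →ₗ[ℤ] C₁)
    (Ω : C₂ →+ ℝ)
    (hint : ∀ c ∈ LinearMap.ker bd, ∃ m : ℤ, Ω c = 2 * Real.pi * m) :
    ∃ ω : AddChar C₁ Circle, ∀ s : C₂, ω (bd s) = Circle.exp (Ω s) :=
  discrete_weil_theorem_general C₂ C₁ bd Ω hint
end

section
/- Let V be a type, ω : V → V → Circle with ω j i = (ω i j)⁻¹ for all i, j, and Ω : V → V → V → ℝ with (ω k i) · (ω j k) · (ω i j) = Circle.exp(Ω i j k) for all i, j, k. Let ψ : V → ℂ be admissible, i.e. ψ i ≠ 0 for all i and ψ j ≠ −(ω i j)·(ψ i) for all i, j, and set ξ i j := Complex.arg(ψ j / ((ω i j)·(ψ i))). Then the index form of ψ is integer-valued: for all vertices i, j, k, the real number (ξ i j + ξ j k + ξ k i + Ω i j k) / (2π) is an integer. -/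
/-!
The rotation form `ξ i j` is the argument of the rotation factor `ψ j / (ω i j · ψ i)`. Around a
triangle the values of `ψ` cancel, so the product of the three factors is the inverse holonomy
`(ω k i · ω j k · ω i j)⁻¹ = exp (-i Ω i j k)`. As `arg` is additive modulo `2π` on nonzero
numbers, `ξ i j + ξ j k + ξ k i + Ω i j k` vanishes in `ℝ / 2πℤ`.
-/

open Real

lemma Complex.arg_mul_mul_coe_angle {x y z : ℂ} (hx : x ≠ 0) (hy : y ≠ 0) (hz : z ≠ 0) :
    (arg (x * y * z) : Angle) = arg x + arg y + arg z := by
  rw [arg_mul_coe_angle (mul_ne_zero hx hy) hz, arg_mul_coe_angle hx hy]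

lemma Circle.arg_exp_coe_angle (θ : ℝ) : (Complex.arg (Circle.exp θ) : Angle) = θ := by
  rw [← Angle.toCircle_coe, Angle.arg_toCircle]

lemma Real.Angle.exists_int_div_two_pi_eq_of_coe_eq_zero {x : ℝ} (h : (x : Angle) = 0) :
    ∃ m : ℤ, x / (2 * π) = m := by
  obtain ⟨m, rfl⟩ := Angle.coe_eq_zero_iff.mp h
  exact ⟨m, by rw [zsmul_eq_mul, mul_div_cancel_right₀ _ two_pi_pos.ne']⟩

section Triangle

variable {V : Type*} (ω : V → V → Circle) (ψ : V → ℂ)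

noncomputable def rotationFactor (i j : V) : ℂ := ψ j / (ω i j * ψ i)

variable {ω ψ}

lemma rotationFactor_ne_zero {i j : V} (hi : ψ i ≠ 0) (hj : ψ j ≠ 0) :
    rotationFactor ω ψ i j ≠ 0 :=
  div_ne_zero hj (mul_ne_zero (Circle.coe_ne_zero _) hi)

lemma rotationFactor_mul_mul_eq_holonomy_inv {i j k : V}
    (hi : ψ i ≠ 0) (hj : ψ j ≠ 0) (hk : ψ k ≠ 0) :
    rotationFactor ω ψ i j * rotationFactor ω ψ j k * rotationFactor ω ψ k i
      = ((ω k i * ω j k * ω i j)⁻¹ : Circle) := by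
  have := Circle.coe_ne_zero (ω i j)
  have := Circle.coe_ne_zero (ω j k)
  have := Circle.coe_ne_zero (ω k i)
  simp only [rotationFactor, Circle.coe_inv, Circle.coe_mul]
  field_simp

end Triangle

theorem index_form_is_integer_valued_general
    (V : Type*)
    (ω : V → V → Circle)
    (Ω : V → V → V → ℝ)
    (hcurv : ∀ i j k, ω k i * ω j k * ω i j = Circle.exp (Ω i j k))
    (ψ : V → ℂ)
    (hψ : ∀ i, ψ i ≠ 0)
    (ξ : V → V → ℝ)
    (hξ : ∀ i j, ξ i j = Complex.arg (ψ j / (((ω i j : ℂ)) * ψ i))) :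
    ∀ i j k, ∃ m : ℤ,
      (ξ i j + ξ j k + ξ k i + Ω i j k) / (2 * Real.pi) = m := by
  intro i j k
  have hξ' : ∀ p q, ξ p q = Complex.arg (rotationFactor ω ψ p q) := hξ
  have hrot : ∀ p q, rotationFactor ω ψ p q ≠ 0 := fun p q ↦
    rotationFactor_ne_zero (hψ p) (hψ q)
  apply Angle.exists_int_div_two_pi_eq_of_coe_eq_zero
  rw [Angle.coe_add, Angle.coe_add, Angle.coe_add, hξ', hξ', hξ',
    ← Complex.arg_mul_mul_coe_angle (hrot i j) (hrot j k) (hrot k i),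
    rotationFactor_mul_mul_eq_holonomy_inv (hψ i) (hψ j) (hψ k), hcurv, ← Circle.exp_neg,
    Circle.arg_exp_coe_angle, Angle.coe_neg, neg_add_cancel]

/-- for a discrete hermitian line bundle with curvature `Ω` (in a vertex
trivialization, connection `ω` with `ω k i * ω j k * ω i j = exp(i Ω i j k)`) and an
admissible section `ψ` with rotation form `ξ i j = arg(ψ j / (ω i j · ψ i))`, the index
form `(ξ i j + ξ j k + ξ k i + Ω i j k)/(2π)` is integer-valued. -/
theorem index_form_is_integer_valued
    (V : Type*)
    (ω : V → V → Circle) (hω : ∀ i j, ω j i = (ω i j)⁻¹)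
    (Ω : V → V → V → ℝ)
    (hcurv : ∀ i j k, ω k i * ω j k * ω i j = Circle.exp (Ω i j k))
    (ψ : V → ℂ)
    (hψ : ∀ i, ψ i ≠ 0)
    (hadm : ∀ i j, ψ j ≠ -(((ω i j : ℂ)) * ψ i))
    (ξ : V → V → ℝ)
    (hξ : ∀ i j, ξ i j = Complex.arg (ψ j / (((ω i j : ℂ)) * ψ i))) :
    ∀ i j k, ∃ m : ℤ,
      (ξ i j + ξ j k + ξ k i + Ω i j k) / (2 * Real.pi) = m :=
  index_form_is_integer_valued_general V ω Ω hcurv ψ hψ ξ hξ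
end

section
/- Let C and C' be finitely generated free ℤ-modules, ∂ : C → C' a ℤ-linear map, and f : A → B a surjective homomorphism of abelian groups. Suppose the fundamental sequence of forms with coefficients in A is exact, meaning: every group homomorphism ker ∂ → A extends to a homomorphism C → A, and every homomorphism ω : C → A vanishing on ker ∂ is of the form ω = η ∘ ∂ for some homomorphism η : C' → A. Then the fundamental sequence of forms with coefficients in B is exact: every group homomorphism ker ∂ → B extends to C → B, and every homomorphism Ω : C → B vanishing on ker ∂ is of the form Ω = η ∘ ∂ for some homomorphism η : C' → B. -/
/-!
Since `ker ∂ ⊆ C` and `im ∂ ⊆ C'` are submodules of finitely generated free ℤ-modules, they are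
free, hence projective, so `B`-valued homomorphisms out of them lift along `f` to `A`-valued ones.
For extension, lift `μ : ker ∂ → B` to `A`, extend, and push back down with `f`. For the kernel
of `Φ`, a form `Ω` vanishing on `ker ∂` factors through `C → im ∂`; lifting the factor to `A`
gives an `A`-valued form vanishing on `ker ∂`, which is `η ∘ ∂` by exactness over `A`, and then
`Ω = (f ∘ η) ∘ ∂`.
-/

open Function

theorem Module.Projective.exists_addMonoidHom_lift {P A B : Type*} [AddCommGroup P] [Module ℤ P]
    [Module.Projective ℤ P] [AddCommGroup A] [AddCommGroup B] {f : A →+ B}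
    (hf : Surjective f) (g : P →+ B) : ∃ h : P →+ A, f.comp h = g := by
  obtain rfl : ‹Module ℤ P› = AddCommGroup.toIntModule P := Subsingleton.elim _ _
  obtain ⟨h, hh⟩ := Module.projective_lifting_property f.toIntLinearMap g.toIntLinearMap hf
  exact ⟨h.toAddMonoidHom, AddMonoidHom.ext (LinearMap.congr_fun hh)⟩

/-- `↥N` carries both `N.module` and `AddCommGroup.toIntModule`; the statement uses the latter. -/
theorem Submodule.projective_of_free_int {C : Type*} [AddCommGroup C] [Module ℤ C]
    [Module.Free ℤ C] [Module.Finite ℤ C] (N : Submodule ℤ C) : Module.Projective ℤ N :=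
  Subsingleton.elim N.module (AddCommGroup.toIntModule N) ▸
    @Module.Projective.of_basis ℤ _ N _ N.module _ (N.basisOfPid (Module.Free.chooseBasis ℤ C)).2

section

variable {C C' A B : Type*} [AddCommGroup C] [AddCommGroup C'] [Module ℤ C] [Module ℤ C']
  [AddCommGroup A] [AddCommGroup B] {f : A →+ B} (hf : Surjective f)
include hf

theorem Submodule.exists_extension_of_surjective (N : Submodule ℤ C) [Module.Projective ℤ N]
    (hA : ∀ μ : N →+ A, ∃ ω : C →+ A, ∀ c : N, ω c = μ c) (μ : N →+ B) :
    ∃ ω : C →+ B, ∀ c : N, ω c = μ c := by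
  obtain ⟨μA, rfl⟩ := Module.Projective.exists_addMonoidHom_lift hf μ
  obtain ⟨ω, hω⟩ := hA μA
  exact ⟨f.comp ω, fun c => congrArg f (hω c)⟩

theorem LinearMap.exists_factorization_of_surjective (bd : C →ₗ[ℤ] C')
    [Module.Projective ℤ (LinearMap.range bd)]
    (hA : ∀ ω : C →+ A, (∀ c ∈ LinearMap.ker bd, ω c = 0) → ∃ η : C' →+ A, ∀ x, ω x = η (bd x))
    (Ω : C →+ B) (hΩ : ∀ c ∈ LinearMap.ker bd, Ω c = 0) :
    ∃ η : C' →+ B, ∀ x, Ω x = η (bd x) := by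
  set π : C →+ LinearMap.range bd := bd.rangeRestrict.toAddMonoidHom
  have hπ : ∀ c, π c = 0 ↔ c ∈ LinearMap.ker bd := fun c => by
    rw [← LinearMap.ker_rangeRestrict]; rfl
  obtain ⟨Ω', hΩ'⟩ : ∃ Ω' : LinearMap.range bd →+ B, Ω'.comp π = Ω :=
    ⟨π.liftOfSurjective bd.surjective_rangeRestrict ⟨Ω, fun c hc => hΩ c ((hπ c).1 hc)⟩,
      π.liftOfRightInverse_comp _ _ _⟩
  obtain ⟨ωA, rfl⟩ := Module.Projective.exists_addMonoidHom_lift hf Ω'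
  obtain ⟨η, hη⟩ := hA (ωA.comp π) fun c hc => by
    rw [AddMonoidHom.comp_apply, (hπ c).2 hc, map_zero]
  exact ⟨f.comp η, fun x => by rw [← hΩ']; exact congrArg f (hη x)⟩

end

/-- Exactness of the fundamental sequence of forms propagates along a
surjective homomorphism `f : A → B` of abelian coefficient groups. -/
theorem fundamental_sequence_exactness_propagates
    (C C' : Type*) [AddCommGroup C] [AddCommGroup C']
    [Module ℤ C] [Module ℤ C']
    [Module.Free ℤ C] [Module.Free ℤ C']
    [Module.Finite ℤ C] [Module.Finite ℤ C']
    (bd : C →ₗ[ℤ] C')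
    (A B : Type*) [AddCommGroup A] [AddCommGroup B]
    (f : A →+ B) (hf : Function.Surjective f)
    (hsurjA : ∀ μ : (LinearMap.ker bd) →+ A, ∃ ω : C →+ A,
      ∀ c : LinearMap.ker bd, ω (c : C) = μ c)
    (hexactA : ∀ ω : C →+ A, (∀ c ∈ LinearMap.ker bd, ω c = 0) →
      ∃ η : C' →+ A, ∀ x, ω x = η (bd x)) :
    (∀ μ : (LinearMap.ker bd) →+ B, ∃ ω : C →+ B,
      ∀ c : LinearMap.ker bd, ω (c : C) = μ c) ∧
    (∀ Ω : C →+ B, (∀ c ∈ LinearMap.ker bd, Ω c = 0) →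
      ∃ η : C' →+ B, ∀ x, Ω x = η (bd x)) := by
  have := (LinearMap.ker bd).projective_of_free_int
  have := (LinearMap.range bd).projective_of_free_int
  exact ⟨(LinearMap.ker bd).exists_extension_of_surjective hf hsurjA,
    bd.exists_factorization_of_surjective hf hexactA⟩
end

section
/- Let C and C' be finitely generated free ℤ-modules and ∂ : C → C' a ℤ-linear map. Then the fundamental sequence of forms with coefficients in the circle group is exact; in particular, a group homomorphism Ω : C → Circle satisfies Ω(c) = 1 for all c ∈ ker ∂ if and only if there exists a group homomorphism η : C' → Circle with Ω = η ∘ ∂. -/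
/-!
The circle group is divisible, being the image of `ℝ` under `θ ↦ e^{iθ}`, so by Baer's criterion
it is an injective `ℤ`-module: characters extend along injective homomorphisms. A character trivial
on `ker ∂` descends to `C ⧸ ker ∂`, which embeds into `C'` via `∂`, and so extends to `C'`.
-/

noncomputable instance : DivisibleBy (Additive Circle) ℤ :=
  Function.Surjective.divisibleBy Circle.expHom
    (fun z => Circle.exp_surjective (Additive.toMul z)) (fun x n => map_zsmul Circle.expHom n x)

namespace AddChar

variable {A B : Type*} [AddCommGroup A] [AddCommGroup B]

theorem exists_compAddMonoidHom_eq_of_injective {f : A →+ B} (hf : Function.Injective f)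
    (μ : AddChar A Circle) : ∃ ω : AddChar B Circle, ω.compAddMonoidHom f = μ := by
  obtain ⟨ω, hω⟩ := (Module.Baer.of_divisible (Additive Circle)).extension_property_addMonoidHom
    f hf (toAddMonoidHomEquiv μ)
  exact ⟨toAddMonoidHomEquiv.symm ω, toAddMonoidHomEquiv.injective hω⟩

theorem exists_compAddMonoidHom_eq_of_ker_le (f : A →+ B) (Ω : AddChar A Circle)
    (hΩ : ∀ a, f a = 0 → Ω a = 1) : ∃ η : AddChar B Circle, η.compAddMonoidHom f = Ω := by
  have hker : f.ker ≤ (toAddMonoidHomEquiv Ω).ker := fun a ha =>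
    congrArg Additive.ofMul (hΩ a ha)
  obtain ⟨η, hη⟩ := exists_compAddMonoidHom_eq_of_injective (QuotientAddGroup.kerLift_injective f)
    (toAddMonoidHomEquiv.symm (QuotientAddGroup.lift f.ker _ hker))
  exact ⟨η, DFunLike.ext _ _ fun a => DFunLike.congr_fun hη (QuotientAddGroup.mk a)⟩

end AddChar

theorem fundamental_sequence_exact_circle_general
    (C C' : Type*) [AddCommGroup C] [AddCommGroup C']
    [Module ℤ C] [Module ℤ C']
    (bd : C →ₗ[ℤ] C') :
    (∀ μ : AddChar (LinearMap.ker bd) Circle, ∃ ω : AddChar C Circle,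
      ∀ c : LinearMap.ker bd, ω (c : C) = μ c) ∧
    (∀ Ω : AddChar C Circle,
      (∀ c ∈ LinearMap.ker bd, Ω c = 1) ↔ ∃ η : AddChar C' Circle, ∀ x, Ω x = η (bd x)) := by
  refine ⟨fun μ => ?_, fun Ω => ⟨fun hΩ => ?_, ?_⟩⟩
  · obtain ⟨ω, hω⟩ := AddChar.exists_compAddMonoidHom_eq_of_injective
      (f := (LinearMap.ker bd).subtype.toAddMonoidHom) Subtype.val_injective μ
    exact ⟨ω, DFunLike.congr_fun hω⟩
  · obtain ⟨η, hη⟩ := AddChar.exists_compAddMonoidHom_eq_of_ker_le bd.toAddMonoidHom Ω hΩ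
    exact ⟨η, fun x => (DFunLike.congr_fun hη x).symm⟩
  · rintro ⟨η, hη⟩ c hc
    rw [hη, LinearMap.mem_ker.mp hc, AddChar.map_zero_eq_one]

/-- exactness of the fundamental sequence of forms with coefficients in the
circle group: the restriction map to `Hom(ker ∂, Circle)` is surjective, and a
`Circle`-valued form is trivial on `ker ∂` iff it is exact. -/
theorem fundamental_sequence_exact_circle
    (C C' : Type*) [AddCommGroup C] [AddCommGroup C']
    [Module ℤ C] [Module ℤ C']
    [Module.Free ℤ C] [Module.Free ℤ C']
    [Module.Finite ℤ C] [Module.Finite ℤ C']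
    (bd : C →ₗ[ℤ] C') :
    (∀ μ : AddChar (LinearMap.ker bd) Circle, ∃ ω : AddChar C Circle,
      ∀ c : LinearMap.ker bd, ω (c : C) = μ c) ∧
    (∀ Ω : AddChar C Circle,
      (∀ c ∈ LinearMap.ker bd, Ω c = 1) ↔ ∃ η : AddChar C' Circle, ∀ x, Ω x = η (bd x)) :=
  fundamental_sequence_exact_circle_general C C' bd
end

section
/- Let C and C' be finitely generated free ℤ-modules and ∂ : C → C' a ℤ-linear map. Then the fundamental sequence of forms with coefficients in the multiplicative group ℂˣ of nonzero complex numbers is exact; in particular, a group homomorphism Ω : C → ℂˣ satisfies Ω(c) = 1 for all c ∈ ker ∂ if and only if there exists a group homomorphism η : C' → ℂˣ with Ω = η ∘ ∂. -/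
/-!
Since `exp : ℂ → ℂˣ` is surjective and `ℂ` is divisible, `ℂˣ` is divisible, i.e. an injective
`ℤ`-module. Characters with values in it therefore extend along injective homomorphisms: from
`ker ∂` to `C`, and from `C ⧸ ker ∂` to `C'` along the embedding induced by `∂`, through which
every character trivial on `ker ∂` factors.
-/

namespace Complex

noncomputable instance divisibleByAdditiveUnits : DivisibleBy (Additive ℂˣ) ℤ :=
  Function.Surjective.divisibleBy (fun z : ℂ => Additive.ofMul (Units.mk0 (exp z) (exp_ne_zero z)))
    (fun u => ⟨log (Additive.toMul u : ℂˣ), by ext; simp [exp_log (Additive.toMul u).ne_zero]⟩)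
    (fun z n => by ext; simp [exp_int_mul])

end Complex

namespace AddChar

variable {A B G : Type*} [AddCommGroup A] [AddCommGroup B] [CommGroup G]
  [DivisibleBy (Additive G) ℤ]

theorem exists_extend_of_injective {f : A →+ B} (hf : Function.Injective f) (ψ : AddChar A G) :
    ∃ χ : AddChar B G, ∀ a, χ (f a) = ψ a := by
  obtain ⟨χ, hχ⟩ := (Module.Baer.of_divisible (Additive G)).extension_property_addMonoidHom
    f hf (toAddMonoidHomEquiv ψ)
  exact ⟨toAddMonoidHomEquiv.symm χ, fun a => congr(Additive.toMul ($hχ a))⟩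

theorem forall_mem_ker_eq_one_iff_exists_comp (f : A →+ B) (ψ : AddChar A G) :
    (∀ a ∈ f.ker, ψ a = 1) ↔ ∃ χ : AddChar B G, ∀ a, ψ a = χ (f a) := by
  refine ⟨fun hψ => ?_, fun ⟨χ, hχ⟩ a ha => by rw [hχ, f.mem_ker.mp ha, map_zero_eq_one]⟩
  let ψ' : A ⧸ f.ker →+ Additive G :=
    QuotientAddGroup.lift f.ker (toAddMonoidHomEquiv ψ) fun a ha => congr(Additive.ofMul $(hψ a ha))
  obtain ⟨χ, hχ⟩ := exists_extend_of_injective (QuotientAddGroup.kerLift_injective f)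
    (toAddMonoidHomEquiv.symm ψ')
  exact ⟨χ, fun a => (hχ a).symm⟩

end AddChar

theorem fundamental_sequence_exact_units_complex_general
    (C C' : Type*) [AddCommGroup C] [AddCommGroup C']
    [Module ℤ C] [Module ℤ C']
    (bd : C →ₗ[ℤ] C') :
    (∀ μ : AddChar (LinearMap.ker bd) ℂˣ, ∃ ω : AddChar C ℂˣ,
      ∀ c : LinearMap.ker bd, ω (c : C) = μ c) ∧
    (∀ Ω : AddChar C ℂˣ,
      (∀ c ∈ LinearMap.ker bd, Ω c = 1) ↔ ∃ η : AddChar C' ℂˣ, ∀ x, Ω x = η (bd x)) :=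
  ⟨AddChar.exists_extend_of_injective (f := (LinearMap.ker bd).subtype.toAddMonoidHom)
      Subtype.val_injective,
    fun Ω => AddChar.forall_mem_ker_eq_one_iff_exists_comp bd.toAddMonoidHom Ω⟩

/-- exactness of the fundamental sequence of forms with coefficients in the
multiplicative group `ℂˣ`: the restriction map to `Hom(ker ∂, ℂˣ)` is surjective, and a
`ℂˣ`-valued form is trivial on `ker ∂` iff it is exact. -/
theorem fundamental_sequence_exact_units_complex
    (C C' : Type*) [AddCommGroup C] [AddCommGroup C']
    [Module ℤ C] [Module ℤ C']
    [Module.Free ℤ C] [Module.Free ℤ C']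
    [Module.Finite ℤ C] [Module.Finite ℤ C']
    (bd : C →ₗ[ℤ] C') :
    (∀ μ : AddChar (LinearMap.ker bd) ℂˣ, ∃ ω : AddChar C ℂˣ,
      ∀ c : LinearMap.ker bd, ω (c : C) = μ c) ∧
    (∀ Ω : AddChar C ℂˣ,
      (∀ c ∈ LinearMap.ker bd, Ω c = 1) ↔ ∃ η : AddChar C' ℂˣ, ∀ x, Ω x = η (bd x)) :=
  fundamental_sequence_exact_units_complex_general C C' bd
end

section
/- Let n ≥ 1 and let v₀, v₁, …, v_n be an affinely independent family of points in ℝⁿ (equivalently, an affine basis of the n-dimensional real vector space). Then for every function f assigning a real number to each unordered pair {i, j} with i ≠ j (the 1-simplices, i.e. edges, of the simplex), there exists a unique symmetric bilinear form S on ℝⁿ such that S(v_j − v_i, v_j − v_i) = f({i, j}) for all i ≠ j. Equivalently, the linear map sending a symmetric bilinear form S to the edge function {i, j} ↦ S(v_j − v_i, v_j − v_i) is a linear isomorphism from the space of symmetric bilinear forms on ℝⁿ onto the space of real-valued functions on the n(n+1)/2 edges. -/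
/-!
Polarization `2 S(x, y) = S(x, x) + S(y, y) - S(y - x, y - x)` shows that a symmetric form is
determined by its values on the edge vectors `vⱼ - vᵢ`: with `eᵢ = vᵢ - v₀` a basis, every
`S(eₖ, eₗ)` is a combination of values on the edges `v₀vₖ`, `v₀vₗ`, `vₖvₗ`. Conversely, writing
vectors in barycentric coordinates `λ`, the form `S(x, y) = -½ ∑ₖₗ f k l λₖ(x) λₗ(y)` (with `f`
vanishing on the diagonal) takes the value `f i j` on the edge `vⱼ - vᵢ`, whose coordinates are
`δⱼ - δᵢ`.
-/

open Finset

variable {ι R V P : Type*} [CommRing R] [AddCommGroup V] [Module R V] [AddTorsor V P]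

theorem LinearMap.two_mul_apply_of_comm (S : V →ₗ[R] V →ₗ[R] R) (hS : ∀ x y, S x y = S y x)
    (x y : V) : 2 * S x y = S x x + S y y - S (y - x) (y - x) := by
  simp only [map_sub, LinearMap.sub_apply, hS y x]
  ring

namespace AffineBasis

variable [Invertible (2 : R)] (b : AffineBasis ι R P)

theorem ext_bilin_of_comm {S T : V →ₗ[R] V →ₗ[R] R} (hS : ∀ x y, S x y = S y x)
    (hT : ∀ x y, T x y = T y x)
    (h : ∀ i j, i ≠ j → S (b j -ᵥ b i) (b j -ᵥ b i) = T (b j -ᵥ b i) (b j -ᵥ b i)) :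
    S = T := by
  have h' : ∀ i j, S (b j -ᵥ b i) (b j -ᵥ b i) = T (b j -ᵥ b i) (b j -ᵥ b i) := by
    intro i j
    rcases eq_or_ne i j with rfl | hij
    · simp
    · exact h i j hij
  obtain ⟨i₀⟩ := b.nonempty
  refine LinearMap.ext_basis (b.basisOf i₀) (b.basisOf i₀) fun i j => ?_
  simp only [basisOf_apply]
  apply (isUnit_of_invertible (2 : R)).mul_left_cancel
  rw [S.two_mul_apply_of_comm hS, T.two_mul_apply_of_comm hT, vsub_sub_vsub_cancel_right,
    h', h', h']

variable [Fintype ι]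

noncomputable def edgeForm (f : ι → ι → R) : V →ₗ[R] V →ₗ[R] R :=
  (-⅟2 : R) • ∑ i, ∑ j, f i j • (LinearMap.mul R R).compl₁₂ (b.coord i).linear (b.coord j).linear

theorem edgeForm_apply (f : ι → ι → R) (x y : V) :
    b.edgeForm f x y = -⅟2 * ∑ i, ∑ j, f i j * ((b.coord i).linear x * (b.coord j).linear y) := by
  simp only [edgeForm, LinearMap.smul_apply, LinearMap.sum_apply, LinearMap.compl₁₂_apply,
    LinearMap.mul_apply', smul_eq_mul]

theorem edgeForm_comm {f : ι → ι → R} (hf : ∀ i j, f i j = f j i) (x y : V) :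
    b.edgeForm f x y = b.edgeForm f y x := by
  simp only [edgeForm_apply]
  rw [sum_comm]
  simp only [hf, mul_comm]

theorem edgeForm_apply_vsub (f : ι → ι → R) (i j : ι) :
    b.edgeForm f (b j -ᵥ b i) (b j -ᵥ b i) = ⅟2 * (f i j + f j i - f i i - f j j) := by
  classical
  simp only [edgeForm_apply, AffineMap.linearMap_vsub, coord_apply, vsub_eq_sub, mul_sub, sub_mul,
    sum_sub_distrib]
  simp only [mul_ite, mul_one, mul_zero, sum_ite_eq', mem_univ, ↓reduceIte, neg_mul, sub_neg_eq_add]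
  ring

theorem existsUnique_comm_apply_vsub {f : ι → ι → R} (hf : ∀ i j, f i j = f j i) :
    ∃! S : V →ₗ[R] V →ₗ[R] R, (∀ x y, S x y = S y x) ∧
      ∀ i j, i ≠ j → S (b j -ᵥ b i) (b j -ᵥ b i) = f i j := by
  classical
  let g i j := if i = j then 0 else f i j
  have hg : ∀ i j, g i j = g j i := fun i j => by simp only [g, eq_comm, hf]
  have hedge : ∀ i j, i ≠ j → b.edgeForm g (b j -ᵥ b i) (b j -ᵥ b i) = f i j := fun i j hij => by
    simp only [edgeForm_apply_vsub, g, if_neg hij, if_neg hij.symm, hf j i, eq_self, if_true]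
    rw [sub_zero, sub_zero, ← two_mul, invOf_mul_cancel_left]
  refine ⟨b.edgeForm g, ⟨b.edgeForm_comm hg, hedge⟩, fun S ⟨hS, hSf⟩ => ?_⟩
  exact b.ext_bilin_of_comm hS (b.edgeForm_comm hg) fun i j hij =>
    (hSf i j hij).trans (hedge i j hij).symm

end AffineBasis

theorem discrete_metric_determines_symmetric_tensor_general
    (n : ℕ)
    (v : Fin (n + 1) → (Fin n → ℝ))
    (hv : AffineIndependent ℝ v)
    (f : Fin (n + 1) → Fin (n + 1) → ℝ)
    (hf : ∀ i j, f i j = f j i) :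
    ∃! S : (Fin n → ℝ) →ₗ[ℝ] (Fin n → ℝ) →ₗ[ℝ] ℝ,
      (∀ x y, S x y = S y x) ∧
      ∀ i j, i ≠ j → S (v j - v i) (v j - v i) = f i j :=
  let b : AffineBasis (Fin (n + 1)) ℝ (Fin n → ℝ) :=
    ⟨v, hv, hv.affineSpan_eq_top_iff_card_eq_finrank_add_one.2 (by simp)⟩
  b.existsUnique_comm_apply_vsub hf

/-- for an affinely independent family `v₀, …, v_n` in `ℝⁿ` (`n ≥ 1`) and
any symmetric assignment `f` of real numbers to the edges `{i,j}`, `i ≠ j`, there is a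
unique symmetric bilinear form `S` on `ℝⁿ` with `S (v j - v i) (v j - v i) = f i j` for
all `i ≠ j` (a discrete metric determines a unique constant symmetric 2-tensor). -/
theorem discrete_metric_determines_symmetric_tensor
    (n : ℕ) (hn : 1 ≤ n)
    (v : Fin (n + 1) → (Fin n → ℝ))
    (hv : AffineIndependent ℝ v)
    (f : Fin (n + 1) → Fin (n + 1) → ℝ)
    (hf : ∀ i j, f i j = f j i) :
    ∃! S : (Fin n → ℝ) →ₗ[ℝ] (Fin n → ℝ) →ₗ[ℝ] ℝ,
      (∀ x y, S x y = S y x) ∧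
      ∀ i j, i ≠ j → S (v j - v i) (v j - v i) = f i j :=
  discrete_metric_determines_symmetric_tensor_general n v hv f hf
end

section
/- Let E be a finite-dimensional real inner product space of dimension n ≥ 1 and let v₀, …, v_n be an affine basis of E (n + 1 affinely independent points spanning E). For each i, let x_i : E → ℝ be the i-th barycentric coordinate (the unique affine map with x_i(v_j) = δ_{ij}) and let g_i ∈ E be its gradient, i.e. the unique vector with x_i(p) − x_i(q) = ⟪g_i, p − q⟫ for all p, q ∈ E. Let p_i be the orthogonal projection of v_i onto the affine span of {v_j : j ≠ i} and h_i := dist(v_i, p_i) > 0 the distance from v_i to the opposite face. Then g_i = (v_i − p_i) / h_i²; equivalently, g_i = −N_i / h_i where N_i := (p_i − v_i)/h_i is the outward-pointing unit normal of the face opposite to v_i. -/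
/-!
The affine function `q ↦ ⟪(v i - p i) / h i², q - p i⟫` vanishes at every vertex `v j` of the
opposite face, because `v i - p i` is orthogonal to that face, and equals `1` at `v i`. Agreeing
with `x i` on an affine basis, it is `x i`, so its gradient is `g i` by nondegeneracy of the inner
product.
-/

open scoped RealInnerProductSpace

section

variable {ι E : Type*} [NormedAddCommGroup E] [InnerProductSpace ℝ E]

theorem AffineBasis.coord_apply_eq_inner [Fintype ι] (B : AffineBasis ι ℝ E) {i : ι} {w p : E}
    (h : ∀ j, ⟪w, B j - p⟫ = B.coord i (B j)) (q : E) : B.coord i q = ⟪w, q - p⟫ := by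
  classical
  have hq : q - p = ∑ j, B.coord j q • (B j - p) := by
    simp only [smul_sub, Finset.sum_sub_distrib, ← Finset.sum_smul, B.sum_coord_apply_eq_one,
      one_smul, B.linear_combination_coord_eq_self]
  simp [hq, inner_sum, inner_smul_right, h, B.coord_apply]

theorem AffineBasis.ne_of_mem_affineSpan_image_ne (B : AffineBasis ι ℝ E) {i : ι} {p : E}
    (hp : p ∈ affineSpan ℝ (B '' {j | j ≠ i})) : B i ≠ p := by
  rintro rfl
  exact (B.ind.mem_affineSpan_iff i _).mp hp rfl

theorem inner_inv_dist_sq_smul_sub_self {v p : E} (h : v ≠ p) :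
    ⟪(dist v p ^ 2)⁻¹ • (v - p), v - p⟫ = 1 := by
  rw [real_inner_smul_left, real_inner_self_eq_norm_sq, ← dist_eq_norm]
  exact inv_mul_cancel₀ (pow_ne_zero 2 (dist_ne_zero.mpr h))

end

theorem barycentric_gradient_eq_general
    (E : Type*) [NormedAddCommGroup E] [InnerProductSpace ℝ E]
    (n : ℕ)
    (B : AffineBasis (Fin (n + 1)) ℝ E)
    (g : Fin (n + 1) → E)
    (hg : ∀ i (p q : E), B.coord i p - B.coord i q = ⟪g i, p - q⟫)
    (p : Fin (n + 1) → E)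
    (hp_mem : ∀ i, p i ∈ affineSpan ℝ (⇑B '' {j | j ≠ i}))
    (hp_orth : ∀ i, ∀ q ∈ affineSpan ℝ (⇑B '' {j | j ≠ i}),
      ⟪B i - p i, q - p i⟫ = 0) :
    ∀ i, g i = ((dist (B i) (p i)) ^ 2)⁻¹ • (B i - p i) := by
  intro i
  set w := ((dist (B i) (p i)) ^ 2)⁻¹ • (B i - p i)
  have hdual : ∀ j, ⟪w, B j - p i⟫ = B.coord i (B j) := by
    intro j
    rcases eq_or_ne j i with rfl | hji
    · rw [B.coord_apply_eq]
      exact inner_inv_dist_sq_smul_sub_self (B.ne_of_mem_affineSpan_image_ne (hp_mem j))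
    · rw [B.coord_apply_ne hji.symm, real_inner_smul_left,
        hp_orth i _ (mem_affineSpan ℝ ⟨j, hji, rfl⟩), mul_zero]
  refine ext_inner_right ℝ fun u => ?_
  calc ⟪g i, u⟫ = B.coord i (u + p i) - B.coord i (p i) := by rw [hg, add_sub_cancel_right]
    _ = ⟪w, u⟫ := by simp [B.coord_apply_eq_inner hdual]

/-- for an affine basis `v₀, …, v_n` of an `n`-dimensional real inner
product space (`n ≥ 1`), the gradient `g i` of the `i`-th barycentric coordinate is
`(v i - p i)/h i²`, where `p i` is the orthogonal projection of `v i` onto the affine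
span of the opposite face and `h i = dist (v i) (p i)` is the corresponding height
(equivalently `g i = -N i / h i` for the outward unit normal `N i`). -/
theorem barycentric_gradient_eq
    (E : Type*) [NormedAddCommGroup E] [InnerProductSpace ℝ E] [FiniteDimensional ℝ E]
    (n : ℕ) (hn : 1 ≤ n) (hdim : Module.finrank ℝ E = n)
    (B : AffineBasis (Fin (n + 1)) ℝ E)
    (g : Fin (n + 1) → E)
    (hg : ∀ i (p q : E), B.coord i p - B.coord i q = ⟪g i, p - q⟫)
    (p : Fin (n + 1) → E)
    (hp_mem : ∀ i, p i ∈ affineSpan ℝ (⇑B '' {j | j ≠ i}))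
    (hp_orth : ∀ i, ∀ q ∈ affineSpan ℝ (⇑B '' {j | j ≠ i}),
      ⟪B i - p i, q - p i⟫ = 0) :
    ∀ i, g i = ((dist (B i) (p i)) ^ 2)⁻¹ • (B i - p i) :=
  barycentric_gradient_eq_general E n B g hg p hp_mem hp_orth
end
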